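/- arXiv:2303.02144 — 4 statements merged into one kernel-verified Lean document; each statement's English description precedes it below -/
import Mathlib

section
/- Counting bound: Let X be a set of size N, H an l-bounded family of subsets of X, and w a nonnegative integer. For each W ⊆ X with |W| = w, let G_W be the family of minimal elements of {S \ W : S ∈ H} of size greater than 0.9 l. Then for each integer k, the number of pairs (W, S') with |W| = w, S' ∈ G_W, |S'| = k is at most C(N, w+k) · C(l, k). -/
open Finset
open scoped Classical

/-- p-biased measure of a family of subsets of `Fin N`. -/
noncomputable def mu (N : ℕ) (p : ℝ) (F : Finset (Finset (Fin N))) : ℝ :=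
  ∑ S ∈ F, p ^ S.card * (1 - p) ^ (N - S.card)

/-- Expected number of members: `E_p(|G|) = Σ_{S∈G} p^{|S|}`. -/
noncomputable def Ep (N : ℕ) (p : ℝ) (G : Finset (Finset (Fin N))) : ℝ :=
  ∑ S ∈ G, p ^ S.card

/-- Upward closure `⟨G⟩`: all subsets of `Fin N` containing a member of `G`. -/
noncomputable def cl (N : ℕ) (G : Finset (Finset (Fin N))) : Finset (Finset (Fin N)) :=
  Finset.univ.filter (fun T => ∃ S ∈ G, S ⊆ T)

/-- `G` covers `F`: every member of `F` contains a member of `G`, i.e. `F ⊆ ⟨G⟩`. -/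
def Covers (N : ℕ) (G F : Finset (Finset (Fin N))) : Prop :=
  ∀ S ∈ F, ∃ T ∈ G, T ⊆ S

/-- Cover cost `f(H)`: infimum of `E_p(|G|)` over families `G` covering `H`. -/
noncomputable def coverCost (N : ℕ) (p : ℝ) (H : Finset (Finset (Fin N))) : ℝ :=
  sInf {x : ℝ | ∃ G : Finset (Finset (Fin N)), Covers N G H ∧ x = Ep N p G}

/-- The `m`-th level: all `m`-element subsets of `Fin N`. -/
noncomputable def level (N m : ℕ) : Finset (Finset (Fin N)) :=
  Finset.powersetCard m Finset.univ

/-- `G_W`: minimal elements of `H_W = {S \ W : S ∈ H}` of size greater than `0.9 l`. -/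
noncomputable def GW (N : ℕ) (H : Finset (Finset (Fin N))) (l : ℕ) (W : Finset (Fin N)) :
    Finset (Finset (Fin N)) :=
  (H.image (fun S => S \ W)).filter
    (fun T => (∀ T' ∈ H.image (fun S => S \ W), T' ⊆ T → T' = T) ∧
      (0.9 * (l : ℝ) < (T.card : ℝ)))

/-! Send a pair `(W, S')` to the `(w + k)`-set `U = W ∪ S'`, from which `W = U \ S'` is recovered.
Over a fixed `U`, pick one pair `(W₀, S₀ \ W₀)` with `S₀ ∈ H`; then `S₀ ⊆ U`, and for any other pair
`(W, S')` over `U` we have `S₀ \ W ⊆ S'`, so minimality of `S'` forces `S' = S₀ \ W ⊆ S₀`. Hence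
each fibre has at most `C(|S₀|, k) ≤ C(l, k)` elements. -/

variable {N : ℕ} {H : Finset (Finset (Fin N))} {l : ℕ} {W S T : Finset (Fin N)}

theorem exists_sdiff_eq_of_mem_GW (hT : T ∈ GW N H l W) : ∃ S ∈ H, S \ W = T := by
  simp only [GW, mem_filter, mem_image] at hT
  exact hT.1

theorem disjoint_of_mem_GW (hT : T ∈ GW N H l W) : Disjoint W T := by
  obtain ⟨S, -, rfl⟩ := exists_sdiff_eq_of_mem_GW hT
  exact disjoint_sdiff

theorem sdiff_eq_of_mem_GW_of_subset_union (hT : T ∈ GW N H l W) (hS : S ∈ H)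
    (hSWT : S ⊆ W ∪ T) : S \ W = T := by
  simp only [GW, mem_filter] at hT
  exact hT.2.1 _ (mem_image_of_mem _ hS) (sdiff_le_iff.mpr hSWT)

theorem card_filter_mem_GW_sdiff_le (hbdd : ∀ S ∈ H, S.card ≤ l) (k : ℕ) (U : Finset (Fin N)) :
    ((powersetCard k U).filter (fun T => T ∈ GW N H l (U \ T))).card ≤ l.choose k := by
  set F := (powersetCard k U).filter (fun T => T ∈ GW N H l (U \ T))
  obtain hF | ⟨T₀, hT₀⟩ := F.eq_empty_or_nonempty
  · simp [hF]
  have hU : ∀ T ∈ F, (U \ T) ∪ T = U := fun T hT =>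
    sdiff_union_of_subset (mem_powersetCard.mp (mem_filter.mp hT).1).1
  obtain ⟨S₀, hS₀H, hS₀⟩ := exists_sdiff_eq_of_mem_GW (mem_filter.mp hT₀).2
  have hS₀U : S₀ ⊆ U := by
    have h : S₀ ⊆ (U \ T₀) ∪ (S₀ \ (U \ T₀)) := le_sup_sdiff
    rwa [hS₀, hU T₀ hT₀] at h
  have hFS₀ : F ⊆ powersetCard k S₀ := by
    intro T hT
    obtain ⟨hTU, hTGW⟩ := mem_filter.mp hT
    have hT : S₀ \ (U \ T) = T :=
      sdiff_eq_of_mem_GW_of_subset_union hTGW hS₀H ((hU T hT).symm ▸ hS₀U)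
    exact mem_powersetCard.mpr ⟨hT ▸ sdiff_subset, (mem_powersetCard.mp hTU).2⟩
  calc F.card ≤ (powersetCard k S₀).card := card_le_card hFS₀
    _ = S₀.card.choose k := card_powersetCard k S₀
    _ ≤ l.choose k := Nat.choose_le_choose k (hbdd S₀ hS₀H)

theorem card_sigma_GW_le_card_sigma_union (w k : ℕ) :
    ((powersetCard w univ).sigma fun W => (GW N H l W).filter (fun S' => S'.card = k)).card ≤
      ((powersetCard (w + k) univ).sigma
        fun U => (powersetCard k U).filter (fun T => T ∈ GW N H l (U \ T))).card := by
  refine card_le_card_of_injOn (fun x => ⟨x.1 ∪ x.2, x.2⟩) ?_ ?_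
  · rintro ⟨W, T⟩ hx
    simp only [coe_sigma, Set.mem_sigma_iff, mem_coe, mem_powersetCard, mem_filter] at hx ⊢
    obtain ⟨⟨-, hW⟩, hT, hTk⟩ := hx
    have hWT := disjoint_of_mem_GW hT
    refine ⟨⟨subset_univ _, by rw [card_union_of_disjoint hWT, hW, hTk]⟩,
      ⟨subset_union_right, hTk⟩, ?_⟩
    rwa [union_sdiff_cancel_right hWT]
  · rintro ⟨W, T⟩ hx ⟨W', T'⟩ hx' h
    simp only [Sigma.mk.injEq, heq_eq_eq] at h
    simp only [coe_sigma, Set.mem_sigma_iff, mem_coe, mem_filter] at hx hx'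
    rw [← union_sdiff_cancel_right (disjoint_of_mem_GW hx.2.1),
      ← union_sdiff_cancel_right (disjoint_of_mem_GW hx'.2.1), h.1, h.2]

/-- Counting bound: the number of pairs `(W, S')` with `|W| = w`, `S' ∈ G_W`, `|S'| = k`
is at most `C(N, w+k) · C(l, k)`. -/
theorem counting_pairs {N : ℕ} (l w k : ℕ) (H : Finset (Finset (Fin N)))
    (hbdd : ∀ S ∈ H, S.card ≤ l) :
    ∑ W ∈ Finset.powersetCard w (Finset.univ : Finset (Fin N)),
        ((GW N H l W).filter (fun S' => S'.card = k)).card ≤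
      N.choose (w + k) * l.choose k := by
  rw [← card_sigma]
  calc _ ≤ _ := card_sigma_GW_le_card_sigma_union w k
    _ = ∑ U ∈ powersetCard (w + k) univ,
          ((powersetCard k U).filter (fun T => T ∈ GW N H l (U \ T))).card := card_sigma _ _
    _ ≤ (powersetCard (w + k) univ).card * l.choose k :=
        sum_le_card_nsmul _ _ _ fun U _ => card_filter_mem_GW_sdiff_le hbdd k U
    _ = N.choose (w + k) * l.choose k := by rw [card_powersetCard, card_univ, Fintype.card_fin]
end

section
/- Park–Pham covering theorem (inductive form): There is a constant L (L = 1000 suffices) such that for all integers 0 ≤ l ≤ N, any p ∈ (0,1], any set X of size N, and any l-bounded family H of subsets of X with cover cost f(H) ≥ 1/2 − 1/2^{l+2}, the upward closure ⟨H⟩ contains at least a (2/3 + 1/2^{l+2}) fraction of the level L_{m_l}, where m_l = ⌊L p N log₂(l+1)⌋ (interpreting the conclusion vacuously if m_l > N). -/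
open Finset
open scoped Classical

/-!
Induction on `l`. Remove a random `w`-set `Z ⊆ X`, `w ≈ 512 p N`, and replace `H` by the minimal
fragments `S \ Z`. Covering `H` by a cover of the fragments of size `≤ l / 2` together with the
larger fragments shows that the small fragments keep cover cost `≥ 1/2 - 2ε_l ≥ 1/2 - ε_{l/2}`
unless the large ones weigh more than `ε_l`. A large fragment `T` of size `t` is recovered from
`Z ∪ T` as a `t`-subset of a fixed member of `H` inside `Z ∪ T`, so the expected weight of the large
fragments is at most `Σ_{t > l/2} p^t C(N, w + t) C(l, t) / C(N, w) ≤ ε_l²`, and by Markov `Z` is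
heavy with probability `≤ ε_l`. For a light `Z`, an `m`-set `W ⊇ Z` outside `⟨H⟩` leaves an
`(m - w)`-set `W \ Z` outside the closure of the small fragments, where the induction hypothesis
applies: halving `l` lowers `logb 2 (l + 1)` by `1/2`, which pays for the `w` removed points.
Averaging over the `w`-subsets of each `m`-set gives the bound.
-/

open Real

theorem Nat.choose_add_mul_pow_le (n w t : ℕ) :
    n.choose (w + t) * w ^ t ≤ n.choose w * n ^ t := by
  induction t with
  | zero => simp
  | succ t ih =>
    have step : n.choose (w + t + 1) * w ≤ n.choose (w + t) * n :=
      calc n.choose (w + t + 1) * w ≤ n.choose (w + t + 1) * (w + t + 1) := by gcongr; omega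
        _ = n.choose (w + t) * (n - (w + t)) := Nat.choose_succ_right_eq n (w + t)
        _ ≤ n.choose (w + t) * n := by gcongr; omega
    rw [← add_assoc]
    calc n.choose (w + t + 1) * w ^ (t + 1) = n.choose (w + t + 1) * w * w ^ t := by ring
      _ ≤ n.choose (w + t) * n * w ^ t := by gcongr
      _ = n.choose (w + t) * w ^ t * n := by ring
      _ ≤ n.choose w * n ^ t * n := by gcongr
      _ = n.choose w * n ^ (t + 1) := by ring

theorem Finset.card_filter_lt_mul_le_sum {ι : Type*} (s : Finset ι) {f : ι → ℝ}
    (hf : ∀ i ∈ s, 0 ≤ f i) (a : ℝ) : #{i ∈ s | a < f i} * a ≤ ∑ i ∈ s, f i :=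
  calc #{i ∈ s | a < f i} * a = ∑ i ∈ s with a < f i, a := by rw [sum_const, nsmul_eq_mul]
    _ ≤ ∑ i ∈ s with a < f i, f i := sum_le_sum fun i hi => (mem_filter.1 hi).2.le
    _ ≤ ∑ i ∈ s, f i := sum_le_sum_of_subset_of_nonneg (filter_subset _ _) fun i hi _ => hf i hi

theorem Finset.sdiff_mem_powersetCard_sdiff {α : Type*} [DecidableEq α] {X Z W : Finset α}
    {m : ℕ} (hW : W ∈ powersetCard m X) (hZW : Z ⊆ W) : W \ Z ∈ powersetCard (m - #Z) (X \ Z) := by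
  rw [mem_powersetCard] at hW ⊢
  exact ⟨sdiff_subset_sdiff hW.1 subset_rfl, by rw [card_sdiff_of_subset hZW, hW.2]⟩

theorem Finset.card_filter_superset_le {α : Type*} [DecidableEq α] {X Z : Finset α}
    {B : Finset (Finset α)} {m : ℕ} (hB : B ⊆ powersetCard m X) (hZX : Z ⊆ X) :
    #{W ∈ B | Z ⊆ W} ≤ (#X - #Z).choose (m - #Z) := by
  rw [← card_sdiff_of_subset hZX, ← card_powersetCard]
  refine card_le_card_of_injOn (· \ Z) (fun W hW => ?_)
    ((superset_injOn_sdiff Z).mono fun W hW => (mem_filter.1 hW).2)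
  exact sdiff_mem_powersetCard_sdiff (hB (mem_filter.1 hW).1) (mem_filter.1 hW).2

theorem Finset.sum_card_filter_superset {α : Type*} [DecidableEq α] {X : Finset α}
    {B : Finset (Finset α)} {m : ℕ} (hB : B ⊆ powersetCard m X) (w : ℕ) :
    ∑ Z ∈ powersetCard w X, #{W ∈ B | Z ⊆ W} = #B * m.choose w := by
  have h := sum_card_bipartiteAbove_eq_sum_card_bipartiteBelow (s := powersetCard w X) (t := B)
    (r := fun Z W => Z ⊆ W)
  refine h.trans (sum_const_nat fun W hW => ?_)
  obtain ⟨hWX, hWm⟩ := mem_powersetCard.1 (hB hW)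
  rw [bipartiteBelow, ← hWm, ← card_powersetCard]
  congr 1
  ext Z
  simp only [mem_filter, mem_powersetCard]
  exact ⟨fun h => ⟨h.2, h.1.2⟩, fun h => ⟨⟨h.1.trans hWX, h.2⟩, h.1⟩⟩

theorem Finset.card_le_of_card_superset_le {α : Type*} [DecidableEq α] {X : Finset α}
    {B : Finset (Finset α)} {m w : ℕ} (hB : B ⊆ powersetCard m X) (hwm : w ≤ m) {c δ : ℝ}
    (hc : 0 ≤ c)
    (hbad : #{Z ∈ powersetCard w X | c * (#X - w).choose (m - w) < #{W ∈ B | Z ⊆ W}}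
      ≤ δ * (#X).choose w) :
    #B ≤ (c + δ) * (#X).choose m := by
  have hchoose : ((#X).choose w : ℝ) * ((#X - w).choose (m - w) : ℕ)
      = (#X).choose m * m.choose w := by
    exact_mod_cast (Nat.choose_mul (n := #X) hwm).symm
  have hfiber : ∀ Z ∈ powersetCard w X,
      (#{W ∈ B | Z ⊆ W} : ℝ) ≤ ((#X - w).choose (m - w) : ℕ) := fun Z hZ => by
    obtain ⟨hZX, rfl⟩ := mem_powersetCard.1 hZ
    exact_mod_cast card_filter_superset_le hB hZX
  set C : ℝ := (((#X - w).choose (m - w) : ℕ) : ℝ)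
  have hsum : (#B * m.choose w : ℝ) ≤ (c + δ) * ((#X).choose w * C) :=
    calc (#B * m.choose w : ℝ) = ∑ Z ∈ powersetCard w X, (#{W ∈ B | Z ⊆ W} : ℝ) := by
          exact_mod_cast (sum_card_filter_superset hB w).symm
      _ ≤ ∑ Z ∈ powersetCard w X, (c * C + if c * C < #{W ∈ B | Z ⊆ W} then C else 0) := by
          refine sum_le_sum fun Z hZ => ?_
          split_ifs
          · linarith [hfiber Z hZ, mul_nonneg hc (Nat.cast_nonneg _ : (0 : ℝ) ≤ C)]
          · linarith
      _ = (#X).choose w * c * C + #{Z ∈ powersetCard w X | c * C < #{W ∈ B | Z ⊆ W}} * C := by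
          simp only [sum_add_distrib, sum_const, sum_ite, card_powersetCard, nsmul_eq_mul]
          ring
      _ ≤ (#X).choose w * c * C + δ * (#X).choose w * C := by gcongr
      _ = (c + δ) * ((#X).choose w * C) := by ring
  refine le_of_mul_le_mul_right ?_ (by exact_mod_cast Nat.choose_pos hwm : (0 : ℝ) < m.choose w)
  rw [hchoose] at hsum
  linarith

namespace ParkPham

variable {α : Type*} {p : ℝ}

noncomputable def weight (p : ℝ) (G : Finset (Finset α)) : ℝ := ∑ S ∈ G, p ^ #S

def IsCover (G H : Finset (Finset α)) : Prop := ∀ S ∈ H, ∃ T ∈ G, T ⊆ S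

noncomputable def cost (p : ℝ) (H : Finset (Finset α)) : ℝ :=
  sInf {x : ℝ | ∃ G : Finset (Finset α), IsCover G H ∧ x = weight p G}

theorem coverCost_eq_cost (N : ℕ) (p : ℝ) (H : Finset (Finset (Fin N))) :
    coverCost N p H = cost p H := rfl

theorem weight_nonneg (hp : 0 ≤ p) (G : Finset (Finset α)) : 0 ≤ weight p G :=
  sum_nonneg fun _ _ => pow_nonneg hp _

theorem weight_union_le [DecidableEq α] (hp : 0 ≤ p) (G₁ G₂ : Finset (Finset α)) :
    weight p (G₁ ∪ G₂) ≤ weight p G₁ + weight p G₂ := by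
  have h := sum_union_inter (s₁ := G₁) (s₂ := G₂) (f := fun S => p ^ #S)
  have h₀ := weight_nonneg hp (G₁ ∩ G₂)
  unfold weight at h₀ ⊢
  linarith

theorem weight_eq_sum_card_eq {G : Finset (Finset α)} {I : Finset ℕ}
    (hG : ∀ T ∈ G, #T ∈ I) : weight p G = ∑ t ∈ I, p ^ t * #{T ∈ G | #T = t} := by
  rw [weight, ← sum_fiberwise_of_maps_to hG]
  refine sum_congr rfl fun t _ => ?_
  rw [sum_congr rfl fun T hT => by rw [(mem_filter.1 hT).2], sum_const, nsmul_eq_mul, mul_comm]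

theorem cost_le (hp : 0 ≤ p) {G H : Finset (Finset α)} (hG : IsCover G H) :
    cost p H ≤ weight p G :=
  csInf_le ⟨0, by rintro _ ⟨G', -, rfl⟩; exact weight_nonneg hp G'⟩ ⟨G, hG, rfl⟩

theorem le_cost {b : ℝ} {H : Finset (Finset α)} (h : ∀ G, IsCover G H → b ≤ weight p G) :
    b ≤ cost p H :=
  le_csInf ⟨weight p H, H, fun S hS => ⟨S, hS, subset_rfl⟩, rfl⟩ (by
    rintro _ ⟨G, hG, rfl⟩
    exact h G hG)

theorem cost_empty_le (hp : 0 ≤ p) : cost p (∅ : Finset (Finset α)) ≤ 0 :=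
  (cost_le hp (G := ∅) fun _ h => absurd h (notMem_empty _)).trans_eq (sum_empty)

theorem cost_le_card_mul (hp : 0 ≤ p) {X : Finset α} {H : Finset (Finset α)}
    (hHX : ∀ S ∈ H, S ⊆ X) (hempty : ∅ ∉ H) : cost p H ≤ #X * p := by
  refine (cost_le hp (G := powersetCard 1 X) fun S hS => ?_).trans_eq ?_
  · obtain ⟨x, hx⟩ := nonempty_iff_ne_empty.2 (ne_of_mem_of_not_mem hS hempty)
    exact ⟨{x}, mem_powersetCard.2 ⟨singleton_subset_iff.2 (hHX S hS hx), card_singleton x⟩,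
      singleton_subset_iff.2 hx⟩
  · rw [weight, sum_congr rfl fun S hS => by rw [(mem_powersetCard.1 hS).2, pow_one], sum_const,
      card_powersetCard, Nat.choose_one_right, nsmul_eq_mul]

noncomputable def eps (l : ℕ) : ℝ := 1 / 2 ^ (l + 2)

theorem eps_pos (l : ℕ) : 0 < eps l := by unfold eps; positivity

theorem eps_le_quarter (l : ℕ) : eps l ≤ 1 / 4 := by
  unfold eps
  gcongr
  calc (4 : ℝ) = 2 ^ 2 := by norm_num
    _ ≤ 2 ^ (l + 2) := pow_le_pow_right₀ (by norm_num) (by omega)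

theorem two_mul_eps_le {l : ℕ} (hl : 1 ≤ l) : 2 * eps l ≤ eps (l / 2) := by
  unfold eps
  rw [mul_one_div, div_le_div_iff₀ (by positivity) (by positivity), one_mul,
    ← pow_succ' 2 (l / 2 + 2)]
  exact pow_le_pow_right₀ (by norm_num) (by omega)

theorem geom_tail_le_eps_sq {l : ℕ} (hl : 1 ≤ l) :
    (1 / 128 : ℝ) ^ (l / 2 + 1) / (1 - 1 / 128) ≤ eps l ^ 2 := by
  have h : (1 / 128 : ℝ) ^ (l / 2 + 1) ≤ (1 / 2) ^ (2 * l + 5) :=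
    calc (1 / 128 : ℝ) ^ (l / 2 + 1) = (1 / 2) ^ (7 * (l / 2 + 1)) := by rw [pow_mul]; norm_num
      _ ≤ (1 / 2) ^ (2 * l + 5) := pow_le_pow_of_le_one (by norm_num) (by norm_num) (by omega)
  have heps : eps l ^ 2 = (1 / 2) ^ (2 * l + 5) * 2 := by
    rw [eps, ← one_div_pow, ← pow_mul, show 2 * l + 5 = (l + 2) * 2 + 1 by ring, pow_succ]
    ring
  rw [heps, div_le_iff₀ (by norm_num)]
  nlinarith [pow_pos (by norm_num : (0 : ℝ) < 1 / 2) (2 * l + 5)]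

theorem logb_half_add_one_add_half_le {l : ℕ} (hl : 1 ≤ l) :
    logb 2 ((l / 2 : ℕ) + 1) + 1 / 2 ≤ logb 2 (l + 1) := by
  have hsq : 2 * ((l / 2 : ℕ) + 1 : ℝ) ^ 2 ≤ ((l : ℝ) + 1) ^ 2 := by
    have h2 : 2 * (l / 2) ≤ l := Nat.mul_div_le l 2
    have : 2 * (l / 2 + 1) ^ 2 ≤ (l + 1) ^ 2 := by
      rcases Nat.eq_zero_or_pos (l / 2) with h0 | h0
      · rw [h0]; nlinarith
      · nlinarith
    exact_mod_cast this
  have hlog := logb_le_logb_of_le (b := 2) (by norm_num) (by positivity) hsq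
  rw [logb_mul (by norm_num) (by positivity), logb_pow, logb_pow, logb_self_eq_one (by norm_num)]
    at hlog
  push_cast at hlog ⊢
  linarith

/-- Spending `w ≈ 512 p n` elements halves `l`, which lowers `logb 2 (l + 1)` by at least `1 / 2`
and so frees a budget of `1000 p n ≥ w` in the bound on `m`. -/
theorem exists_step_size {p n lam lam' : ℝ} {m : ℕ} (hp : 0 ≤ p) (hpn : 1 / 4 ≤ p * n)
    (hlam : lam' + 1 / 2 ≤ lam) (hlam' : 0 ≤ lam') (hm : 2000 * p * n * lam < m + 1) :
    ∃ w : ℕ, 0 < w ∧ 512 * (p * n) ≤ w ∧ w ≤ m ∧ 2000 * p * (n - w) * lam' < (m - w : ℕ) + 1 := by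
  set w := ⌈512 * (p * n)⌉₊
  have hw : 512 * (p * n) ≤ w := Nat.le_ceil _
  have hw' : (w : ℝ) < 512 * (p * n) + 1 := Nat.ceil_lt_add_one (by positivity)
  have hwm : w ≤ m := by
    have : (w : ℝ) < m := by nlinarith
    exact_mod_cast this.le
  refine ⟨w, Nat.ceil_pos.2 (by positivity), hw, hwm, ?_⟩
  rw [Nat.cast_sub hwm]
  nlinarith [mul_nonneg (mul_nonneg hp (Nat.cast_nonneg w)) hlam']

theorem pow_mul_choose_mul_choose_le (hp : 0 ≤ p) {n w l t : ℕ} (hw : 512 * (p * n) ≤ w)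
    (hw0 : 0 < w) (hlt : l ≤ 2 * t) :
    p ^ t * ((n.choose (w + t) : ℝ) * l.choose t) ≤ (1 / 128) ^ t * n.choose w := by
  have hwt : (0 : ℝ) < (w : ℝ) ^ t := by positivity
  have hratio : p ^ t * n.choose (w + t) ≤ (1 / 512) ^ t * n.choose w := by
    refine le_of_mul_le_mul_right ?_ hwt
    have hc : (n.choose (w + t) * w ^ t : ℝ) ≤ n.choose w * n ^ t := by
      exact_mod_cast Nat.choose_add_mul_pow_le n w t
    calc p ^ t * n.choose (w + t) * w ^ t = p ^ t * (n.choose (w + t) * w ^ t) := by ring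
      _ ≤ p ^ t * (n.choose w * n ^ t) := by gcongr
      _ = n.choose w * (p * n) ^ t := by ring
      _ ≤ n.choose w * (w / 512) ^ t := by gcongr; linarith
      _ = (1 / 512) ^ t * n.choose w * w ^ t := by rw [div_pow, one_div_pow]; ring
  have hchoose : (l.choose t : ℝ) ≤ 4 ^ t :=
    calc (l.choose t : ℝ) ≤ 2 ^ l := by exact_mod_cast Nat.choose_le_two_pow l t
      _ ≤ 2 ^ (2 * t) := pow_le_pow_right₀ (by norm_num) hlt
      _ = 4 ^ t := by rw [pow_mul]; norm_num
  calc p ^ t * ((n.choose (w + t) : ℝ) * l.choose t) = p ^ t * n.choose (w + t) * l.choose t := by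
        ring
    _ ≤ (1 / 512) ^ t * n.choose w * 4 ^ t := by gcongr
    _ = (1 / 128) ^ t * n.choose w := by rw [mul_right_comm, ← mul_pow]; norm_num

variable [DecidableEq α]

noncomputable def minFragments (H : Finset (Finset α)) (Z : Finset α) : Finset (Finset α) :=
  {T ∈ H.image (· \ Z) | Minimal (· ∈ H.image (· \ Z)) T}

section minFragments

variable {H : Finset (Finset α)} {X Z S T : Finset α}

theorem exists_mem_minFragments_subset (hS : S ∈ H) : ∃ T ∈ minFragments H Z, T ⊆ S \ Z := by
  obtain ⟨T, hTS, hT⟩ :=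
    exists_minimal_le_of_wellFoundedLT (· ∈ H.image (· \ Z)) (S \ Z) (mem_image_of_mem _ hS)
  exact ⟨T, mem_filter.2 ⟨hT.prop, hT⟩, hTS⟩

theorem exists_sdiff_eq_of_mem_minFragments (hT : T ∈ minFragments H Z) :
    ∃ S ∈ H, S \ Z = T :=
  mem_image.1 (mem_filter.1 hT).1

theorem disjoint_of_mem_minFragments (hT : T ∈ minFragments H Z) : Disjoint Z T := by
  obtain ⟨S, -, rfl⟩ := exists_sdiff_eq_of_mem_minFragments hT
  exact disjoint_sdiff

theorem exists_subset_union_of_mem_minFragments (hT : T ∈ minFragments H Z) :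
    ∃ S ∈ H, S ⊆ Z ∪ T := by
  obtain ⟨S, hS, rfl⟩ := exists_sdiff_eq_of_mem_minFragments hT
  exact ⟨S, hS, le_sup_sdiff⟩

theorem subset_of_mem_minFragments (hT : T ∈ minFragments H Z) (hS : S ∈ H)
    (hSZT : S ⊆ Z ∪ T) : T ⊆ S := by
  have h : S \ Z = T :=
    (mem_filter.1 hT).2.eq_of_le (mem_image_of_mem _ hS) (sdiff_le_iff.2 hSZT : S \ Z ≤ T)
  exact h ▸ sdiff_subset

theorem subset_sdiff_of_mem_minFragments (hHX : ∀ S ∈ H, S ⊆ X) (hT : T ∈ minFragments H Z) :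
    T ⊆ X \ Z := by
  obtain ⟨S, hS, rfl⟩ := exists_sdiff_eq_of_mem_minFragments hT
  exact sdiff_subset_sdiff (hHX S hS) subset_rfl

end minFragments

theorem cost_le_cost_add_weight (hp : 0 ≤ p) (H : Finset (Finset α)) (Z : Finset α) (k : ℕ) :
    cost p H ≤
      cost p {T ∈ minFragments H Z | #T ≤ k} + weight p {T ∈ minFragments H Z | k < #T} := by
  rw [← sub_le_iff_le_add]
  refine le_cost fun G hG => ?_
  have hcover : IsCover (G ∪ {T ∈ minFragments H Z | k < #T}) H := by
    intro S hS
    obtain ⟨T, hT, hTS⟩ := exists_mem_minFragments_subset (Z := Z) hS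
    replace hTS := hTS.trans sdiff_subset
    by_cases hk : #T ≤ k
    · obtain ⟨U, hU, hUT⟩ := hG T (mem_filter.2 ⟨hT, hk⟩)
      exact ⟨U, mem_union_left _ hU, hUT.trans hTS⟩
    · exact ⟨T, mem_union_right _ (mem_filter.2 ⟨hT, not_le.1 hk⟩), hTS⟩
  linarith [cost_le hp hcover, weight_union_le hp G {T ∈ minFragments H Z | k < #T}]

/-- All these `T` lie in any single member of `H` contained in `Z'`. -/
theorem card_minFragments_subset_le {H : Finset (Finset α)} {l : ℕ} (hHl : ∀ S ∈ H, #S ≤ l)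
    (Z' : Finset α) (t : ℕ) :
    #{T ∈ powersetCard t Z' | T ∈ minFragments H (Z' \ T)} ≤ l.choose t := by
  by_cases h : ∃ S ∈ H, S ⊆ Z'
  · obtain ⟨S, hS, hSZ'⟩ := h
    calc #{T ∈ powersetCard t Z' | T ∈ minFragments H (Z' \ T)} ≤ #(powersetCard t S) := by
          refine card_le_card fun T hT => ?_
          rw [mem_filter, mem_powersetCard] at hT
          refine mem_powersetCard.2 ⟨subset_of_mem_minFragments hT.2 hS ?_, hT.1.2⟩
          rwa [sdiff_union_of_subset hT.1.1]
      _ ≤ l.choose t := by rw [card_powersetCard]; exact Nat.choose_le_choose t (hHl S hS)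
  · rw [filter_false_of_mem, card_empty]
    · exact Nat.zero_le _
    intro T hT hTmin
    obtain ⟨S, hS, hSsub⟩ := exists_subset_union_of_mem_minFragments hTmin
    exact h ⟨S, hS, by rwa [sdiff_union_of_subset (mem_powersetCard.1 hT).1] at hSsub⟩

/-- Via the injection `(Z, T) ↦ (Z ∪ T, T)`. -/
theorem sum_card_minFragments_le {H : Finset (Finset α)} {X : Finset α} {l : ℕ}
    (hHX : ∀ S ∈ H, S ⊆ X) (hHl : ∀ S ∈ H, #S ≤ l) (w t : ℕ) :
    ∑ Z ∈ powersetCard w X, #{T ∈ minFragments H Z | #T = t}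
      ≤ (#X).choose (w + t) * l.choose t := by
  rw [← card_sigma]
  calc _ ≤ #((powersetCard (w + t) X).sigma
          fun Z' => {T ∈ powersetCard t Z' | T ∈ minFragments H (Z' \ T)}) := by
        refine card_le_card_of_injOn (fun q => ⟨q.1 ∪ q.2, q.2⟩) ?_ ?_
        · rintro ⟨Z, T⟩ hq
          simp only [coe_sigma, Set.mem_sigma_iff, mem_coe, mem_filter, mem_powersetCard] at hq ⊢
          have hd := disjoint_of_mem_minFragments hq.2.1
          refine ⟨⟨union_subset hq.1.1 ((subset_sdiff_of_mem_minFragments hHX hq.2.1).trans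
            sdiff_subset), by rw [card_union_of_disjoint hd, hq.1.2, hq.2.2]⟩,
            ⟨subset_union_right, hq.2.2⟩, by rw [union_sdiff_cancel_right hd]; exact hq.2.1⟩
        · rintro ⟨Z₁, T₁⟩ h₁ ⟨Z₂, T₂⟩ h₂ h
          simp only [Sigma.mk.inj_iff, heq_eq_eq] at h
          obtain ⟨hU, rfl⟩ := h
          simp only [coe_sigma, Set.mem_sigma_iff, mem_coe, mem_filter] at h₁ h₂
          rw [← union_sdiff_cancel_right (disjoint_of_mem_minFragments h₁.2.1),
            ← union_sdiff_cancel_right (disjoint_of_mem_minFragments h₂.2.1), hU]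
    _ = ∑ Z' ∈ powersetCard (w + t) X,
          #{T ∈ powersetCard t Z' | T ∈ minFragments H (Z' \ T)} := card_sigma _ _
    _ ≤ ∑ _Z' ∈ powersetCard (w + t) X, l.choose t :=
        sum_le_sum fun Z' _ => card_minFragments_subset_le hHl Z' t
    _ = (#X).choose (w + t) * l.choose t := by rw [sum_const, card_powersetCard, smul_eq_mul]

theorem sum_weight_minFragments_le (hp : 0 ≤ p) {H : Finset (Finset α)} {X : Finset α} {l w : ℕ}
    (hHX : ∀ S ∈ H, S ⊆ X) (hHl : ∀ S ∈ H, #S ≤ l) (hl : 1 ≤ l) (hw : 512 * (p * #X) ≤ w)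
    (hw0 : 0 < w) :
    ∑ Z ∈ powersetCard w X, weight p {T ∈ minFragments H Z | l / 2 < #T}
      ≤ eps l ^ 2 * (#X).choose w := by
  set I := Ico (l / 2 + 1) (l + 1)
  have hsizes : ∀ Z, ∀ T ∈ {T ∈ minFragments H Z | l / 2 < #T}, #T ∈ I := by
    intro Z T hT
    obtain ⟨hT, hlt⟩ := mem_filter.1 hT
    obtain ⟨S, hS, rfl⟩ := exists_sdiff_eq_of_mem_minFragments hT
    exact mem_Ico.2 ⟨hlt, Nat.lt_succ_of_le ((card_le_card sdiff_subset).trans (hHl S hS))⟩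
  calc ∑ Z ∈ powersetCard w X, weight p {T ∈ minFragments H Z | l / 2 < #T}
      = ∑ t ∈ I, p ^ t * ∑ Z ∈ powersetCard w X,
          (#{T ∈ {T ∈ minFragments H Z | l / 2 < #T} | #T = t} : ℝ) := by
        simp only [weight_eq_sum_card_eq (hsizes _), mul_sum]
        exact sum_comm
    _ ≤ ∑ t ∈ I, p ^ t * ((#X).choose (w + t) * l.choose t : ℕ) := by
        gcongr with t
        refine le_trans ?_ (Nat.cast_le.2 (sum_card_minFragments_le hHX hHl w t))
        push_cast
        exact sum_le_sum fun Z _ =>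
          Nat.cast_le.2 (card_le_card (filter_subset_filter _ (filter_subset _ _)))
    _ ≤ ∑ t ∈ I, (1 / 128) ^ t * ((#X).choose w : ℝ) := by
        refine sum_le_sum fun t ht => ?_
        push_cast
        refine pow_mul_choose_mul_choose_le hp hw hw0 ?_
        have := mem_Ico.1 ht
        omega
    _ = (∑ t ∈ I, (1 / 128 : ℝ) ^ t) * (#X).choose w := (sum_mul _ _ _).symm
    _ ≤ (1 / 128 : ℝ) ^ (l / 2 + 1) / (1 - 1 / 128) * (#X).choose w := by
        gcongr
        exact geom_sum_Ico_le_of_lt_one (by norm_num) (by norm_num)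
    _ ≤ eps l ^ 2 * (#X).choose w := by gcongr; exact geom_tail_le_eps_sq hl

theorem card_heavy_le (hp : 0 ≤ p) {H : Finset (Finset α)} {X : Finset α} {l w : ℕ}
    (hHX : ∀ S ∈ H, S ⊆ X) (hHl : ∀ S ∈ H, #S ≤ l) (hl : 1 ≤ l) (hw : 512 * (p * #X) ≤ w)
    (hw0 : 0 < w) :
    #{Z ∈ powersetCard w X | eps l < weight p {T ∈ minFragments H Z | l / 2 < #T}}
      ≤ eps l * (#X).choose w := by
  refine le_of_mul_le_mul_right ?_ (eps_pos l)
  calc _ ≤ ∑ Z ∈ powersetCard w X, weight p {T ∈ minFragments H Z | l / 2 < #T} :=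
        card_filter_lt_mul_le_sum _ (fun Z _ => weight_nonneg hp _) _
    _ ≤ eps l ^ 2 * (#X).choose w := sum_weight_minFragments_le hp hHX hHl hl hw hw0
    _ = eps l * (#X).choose w * eps l := by ring

def missing (H : Finset (Finset α)) (X : Finset α) (m : ℕ) : Finset (Finset α) :=
  {W ∈ powersetCard m X | ¬∃ S ∈ H, S ⊆ W}

theorem missing_eq_empty_of_empty_mem {H : Finset (Finset α)} (hH : ∅ ∈ H) (X : Finset α)
    (m : ℕ) : missing H X m = ∅ :=
  filter_false_of_mem fun W _ hW => hW ⟨∅, hH, empty_subset W⟩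

theorem card_missing_superset_le {H G : Finset (Finset α)} {X Z : Finset α} {m : ℕ}
    (hG : G ⊆ minFragments H Z) :
    #{W ∈ missing H X m | Z ⊆ W} ≤ #(missing G (X \ Z) (m - #Z)) := by
  refine card_le_card_of_injOn (· \ Z) (fun W hW => ?_)
    ((superset_injOn_sdiff Z).mono fun W hW => (mem_filter.1 hW).2)
  obtain ⟨⟨hWm, hWH⟩, hZW⟩ := (mem_filter.1 hW).imp_left mem_filter.1
  refine mem_filter.2 ⟨sdiff_mem_powersetCard_sdiff hWm hZW, fun ⟨T, hT, hTW⟩ => hWH ?_⟩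
  obtain ⟨S, hS, hSZT⟩ := exists_subset_union_of_mem_minFragments (hG hT)
  exact ⟨S, hS, hSZT.trans (union_subset hZW (hTW.trans sdiff_subset))⟩

theorem card_missing_le (hp : 0 ≤ p) (l : ℕ) {X : Finset α} {H : Finset (Finset α)} {m : ℕ}
    (hHX : ∀ S ∈ H, S ⊆ X) (hHl : ∀ S ∈ H, #S ≤ l) (hcost : 1 / 2 - eps l ≤ cost p H)
    (hm : 2000 * p * #X * logb 2 (l + 1) < m + 1) :
    #(missing H X m) ≤ (1 / 3 - eps l) * (#X).choose m := by
  induction l using Nat.strong_induction_on generalizing X H m with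
  | _ l ih =>
  have hε := eps_le_quarter l
  by_cases hempty : ∅ ∈ H
  · rw [missing_eq_empty_of_empty_mem hempty, card_empty, Nat.cast_zero]
    exact mul_nonneg (by linarith) (Nat.cast_nonneg _)
  have hl : 1 ≤ l := by
    by_contra! hl
    have : H = ∅ := eq_empty_of_forall_notMem fun S hS =>
      hempty (card_eq_zero.1 (Nat.lt_one_iff.1 ((hHl S hS).trans_lt hl)) ▸ hS)
    subst this
    linarith [cost_empty_le hp (α := α)]
  have hpn : 1 / 4 ≤ p * #X := by linarith [cost_le_card_mul hp hHX hempty]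
  obtain ⟨w, hw0, hw, hwm, hm'⟩ := exists_step_size hp hpn (logb_half_add_one_add_half_le hl)
    (logb_nonneg one_lt_two (by simp)) hm
  have hlight : ∀ Z ∈ powersetCard w X, weight p {T ∈ minFragments H Z | l / 2 < #T} ≤ eps l →
      (#{W ∈ missing H X m | Z ⊆ W} : ℝ) ≤ (1 / 3 - 2 * eps l) * (#X - w).choose (m - w) := by
    intro Z hZ hZlight
    obtain ⟨hZX, rfl⟩ := mem_powersetCard.1 hZ
    have hsmall := @ih (l / 2) (Nat.div_lt_self hl one_lt_two) (X \ Z)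
      {T ∈ minFragments H Z | #T ≤ l / 2} (m - #Z)
      (fun T hT => subset_sdiff_of_mem_minFragments hHX (mem_filter.1 hT).1)
      (fun T hT => (mem_filter.1 hT).2)
      (by linarith [cost_le_cost_add_weight hp H Z (l / 2), two_mul_eps_le hl])
      (by rwa [card_sdiff_of_subset hZX, Nat.cast_sub (card_le_card hZX)])
    rw [card_sdiff_of_subset hZX] at hsmall
    calc (#{W ∈ missing H X m | Z ⊆ W} : ℝ)
        ≤ #(missing {T ∈ minFragments H Z | #T ≤ l / 2} (X \ Z) (m - #Z)) := by
          exact_mod_cast card_missing_superset_le (filter_subset _ _)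
      _ ≤ (1 / 3 - eps (l / 2)) * (#X - #Z).choose (m - #Z) := hsmall
      _ ≤ (1 / 3 - 2 * eps l) * (#X - #Z).choose (m - #Z) := by
          gcongr
          linarith [two_mul_eps_le hl]
  refine (card_le_of_card_superset_le (filter_subset _ _) hwm (c := 1 / 3 - 2 * eps l)
    (δ := eps l) (by linarith [two_mul_eps_le hl, eps_le_quarter (l / 2)]) ?_).trans_eq (by ring)
  refine le_trans (Nat.cast_le.2 (card_le_card fun Z hZ => ?_))
    (card_heavy_le hp hHX hHl hl hw hw0)
  rw [mem_filter] at hZ ⊢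
  exact ⟨hZ.1, lt_of_not_ge fun hZlight => hZ.2.not_ge (hlight Z hZ.1 hZlight)⟩

end ParkPham

/-- Park–Pham covering theorem, inductive form. -/
theorem park_pham_inductive :
    ∃ L : ℝ, 0 < L ∧
      ∀ (N l : ℕ), l ≤ N → ∀ p : ℝ, 0 < p → p ≤ 1 →
        ∀ H : Finset (Finset (Fin N)), (∀ S ∈ H, S.card ≤ l) →
          coverCost N p H ≥ 1 / 2 - 1 / 2 ^ (l + 2) →
          ∀ m : ℕ, m = ⌊L * p * N * Real.logb 2 (l + 1)⌋₊ → m ≤ N →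
            ((level N m ∩ cl N H).card : ℝ) ≥
              (2 / 3 + 1 / 2 ^ (l + 2)) * (N.choose m : ℝ) := by
  refine ⟨2000, by norm_num, fun N l _ p hp _ H hHl hcost m hm _ => ?_⟩
  rw [ge_iff_le, ParkPham.coverCost_eq_cost] at hcost
  have hmissing := ParkPham.card_missing_le hp.le l (X := (univ : Finset (Fin N))) (m := m)
    (fun S _ => subset_univ S) hHl hcost
    (by rw [card_univ, Fintype.card_fin, hm]; exact Nat.lt_floor_add_one _)
  have hsplit : #(level N m ∩ cl N H) + #(ParkPham.missing H univ m) = N.choose m := by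
    have hcl : level N m ∩ cl N H
        = {W ∈ powersetCard m (univ : Finset (Fin N)) | ∃ S ∈ H, S ⊆ W} := by
      ext W
      simp [level, cl]
    rw [hcl, ParkPham.missing, card_filter_add_card_filter_not, card_powersetCard,
      card_univ, Fintype.card_fin]
  rw [card_univ, Fintype.card_fin] at hmissing
  have : (#(level N m ∩ cl N H) : ℝ) + #(ParkPham.missing H univ m) = N.choose m := by
    exact_mod_cast hsplit
  unfold ParkPham.eps at hmissing
  linarith
end

section
/- Park–Pham covering theorem: There is a constant L such that for every integer l ≥ 1, every p ∈ (0,1], every finite set X of size N, and every l-bounded family H of subsets of X with cover cost f(H) ≥ 1/2, the upward closure ⟨H⟩ contains at least 2/3 of the level L_{m}, where m = ⌊L p N log₂(l+1)⌋ ≤ N. -/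
open Finset
open scoped Classical

/-!
Park–Pham's minimal-fragment argument. Fix `w ≈ 64 p N` and an `r`-bounded family `F`. For a
`w`-set `W`, replace each `S ∈ F` by its fragment `T(S, W) = S' \ W`, where `S' ∈ F`,
`S' ⊆ S ∪ W` minimises `|S' \ W|`. The fragments of size `> r/2` form a cheap partial cover:
a pair `(W, T)` is determined by `W ∪ T` and `T`, and by minimality `T` lies inside any member
of `F` contained in `W ∪ T`, so averaged over `W` their cost is at most
`Σ_{k > r/2} C(r, k) 64⁻ᵏ`. The fragments of size `≤ r/2` form an `r/2`-bounded family whose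
cover cost has dropped by at most that much, and `W ∪ A` is covered by `F` as soon as `A` is
covered by them. After `log₂ l + 1` rounds only empty fragments remain; double counting then
shows that all but a `2 · (1/16)` fraction of the `t w`-sets are covered, since the accumulated
costs telescope to at most `1/16` while `f(H) ≥ 1/2`. Finally the uncovered sets form a
down-set, so by local LYM their proportion only decreases from level `t w` up to level `m`.
-/

namespace ParkPham

variable {N : ℕ} {p : ℝ}

lemma Ep_nonneg (hp : 0 ≤ p) (G : Finset (Finset (Fin N))) : 0 ≤ Ep N p G :=
  sum_nonneg fun _ _ => pow_nonneg hp _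

lemma Ep_union_le (hp : 0 ≤ p) (A B : Finset (Finset (Fin N))) :
    Ep N p (A ∪ B) ≤ Ep N p A + Ep N p B := by
  have := sum_union_inter (s₁ := A) (s₂ := B) (f := fun S => p ^ #S)
  have := Ep_nonneg hp (A ∩ B)
  simp only [Ep] at *
  linarith

lemma coverCost_le_Ep (hp : 0 ≤ p) {H G : Finset (Finset (Fin N))} (h : Covers N G H) :
    coverCost N p H ≤ Ep N p G :=
  csInf_le ⟨0, by rintro _ ⟨G, -, rfl⟩; exact Ep_nonneg hp G⟩ ⟨G, h, rfl⟩

lemma le_coverCost {H : Finset (Finset (Fin N))} {c : ℝ}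
    (h : ∀ G, Covers N G H → c ≤ Ep N p G) : c ≤ coverCost N p H :=
  le_csInf ⟨_, {∅}, fun _ _ => ⟨∅, mem_singleton_self _, empty_subset _⟩, rfl⟩
    (by rintro _ ⟨G, hG, rfl⟩; exact h G hG)

lemma coverCost_nonneg (hp : 0 ≤ p) (H : Finset (Finset (Fin N))) : 0 ≤ coverCost N p H :=
  le_coverCost fun G _ => Ep_nonneg hp G

lemma coverCost_empty (hp : 0 ≤ p) : coverCost N p ∅ = 0 :=
  le_antisymm (by simpa [Ep] using coverCost_le_Ep hp (G := ∅) fun S hS => (notMem_empty S hS).elim)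
    (coverCost_nonneg hp ∅)

lemma coverCost_le_mul {H : Finset (Finset (Fin N))} (hp : 0 ≤ p) (hH : ∅ ∉ H) :
    coverCost N p H ≤ N * p := by
  have hcov : Covers N (univ.image ({·})) H := by
    intro S hS
    obtain ⟨x, hx⟩ := nonempty_iff_ne_empty.2 (ne_of_mem_of_not_mem hS hH)
    exact ⟨{x}, mem_image_of_mem _ (mem_univ x), singleton_subset_iff.2 hx⟩
  refine (coverCost_le_Ep hp hcov).trans_eq ?_
  simp [Ep, sum_image fun _ _ _ _ h => singleton_injective h]

/-! ### Minimal fragments -/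

/-- A member of `F` inside `S ∪ W` with `#(V \ W)` minimal (junk value `∅` if there is none). -/
noncomputable def minWitness (F : Finset (Finset (Fin N))) (W S : Finset (Fin N)) :
    Finset (Fin N) :=
  if h : {V ∈ F | V ⊆ S ∪ W}.Nonempty then (exists_min_image _ (fun V => #(V \ W)) h).choose
  else ∅

/-- The fragment `T(S, W)` of the paper. -/
noncomputable def frag (F : Finset (Finset (Fin N))) (W S : Finset (Fin N)) : Finset (Fin N) :=
  minWitness F W S \ W

noncomputable def largeFrags (r : ℕ) (F : Finset (Finset (Fin N))) (W : Finset (Fin N)) :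
    Finset (Finset (Fin N)) :=
  {T ∈ F.image (frag F W) | r < 2 * #T}

noncomputable def smallFrags (r : ℕ) (F : Finset (Finset (Fin N))) (W : Finset (Fin N)) :
    Finset (Finset (Fin N)) :=
  {T ∈ F.image (frag F W) | 2 * #T ≤ r}

variable {F : Finset (Finset (Fin N))} {W S V : Finset (Fin N)}

lemma minWitness_spec (hS : S ∈ F) :
    minWitness F W S ∈ F ∧ minWitness F W S ⊆ S ∪ W ∧
      ∀ V ∈ F, V ⊆ S ∪ W → #(frag F W S) ≤ #(V \ W) := by
  have hne : {V ∈ F | V ⊆ S ∪ W}.Nonempty := ⟨S, mem_filter.2 ⟨hS, subset_union_left⟩⟩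
  obtain ⟨hmem, hmin⟩ := (exists_min_image _ (fun V => #(V \ W)) hne).choose_spec
  rw [frag, minWitness, dif_pos hne]
  exact ⟨(mem_filter.1 hmem).1, (mem_filter.1 hmem).2,
    fun V hV hVS => hmin V (mem_filter.2 ⟨hV, hVS⟩)⟩

lemma minWitness_subset_union_frag : minWitness F W S ⊆ W ∪ frag F W S := by
  rw [frag, union_sdiff_self_eq_union]
  exact subset_union_right

lemma frag_subset (hS : S ∈ F) : frag F W S ⊆ S := by
  intro x hx
  obtain ⟨hxV, hxW⟩ := mem_sdiff.1 hx
  exact (mem_union.1 ((minWitness_spec hS).2.1 hxV)).resolve_right hxW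

lemma disjoint_frag : Disjoint W (frag F W S) :=
  disjoint_sdiff

lemma frag_subset_of_subset_union (hS : S ∈ F) (hV : V ∈ F) (hVW : V ⊆ W ∪ frag F W S) :
    frag F W S ⊆ V := by
  have hVS : V ⊆ S ∪ W := fun x hx =>
    (mem_union.1 (hVW hx)).elim (mem_union_right _) (fun h => mem_union_left _ (frag_subset hS h))
  have hsub : V \ W ⊆ frag F W S := sdiff_le_iff.2 hVW
  rw [← eq_of_subset_of_card_le hsub ((minWitness_spec hS).2.2 V hV hVS)]
  exact sdiff_subset

lemma exists_subset_union_of_mem_smallFrags {R : Finset (Fin N)} {r : ℕ}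
    (hR : R ∈ smallFrags r F W) : ∃ S ∈ F, S ⊆ W ∪ R := by
  obtain ⟨S, hS, rfl⟩ := mem_image.1 (mem_filter.1 hR).1
  exact ⟨_, (minWitness_spec hS).1, minWitness_subset_union_frag⟩

lemma coverCost_le_Ep_largeFrags_add (hp : 0 ≤ p) (r : ℕ) (F : Finset (Finset (Fin N)))
    (W : Finset (Fin N)) :
    coverCost N p F ≤ Ep N p (largeFrags r F W) + coverCost N p (smallFrags r F W) := by
  rw [← sub_le_iff_le_add']
  refine le_coverCost fun G hG => ?_
  have hcov : Covers N (largeFrags r F W ∪ G) F := by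
    intro S hS
    by_cases hlarge : r < 2 * #(frag F W S)
    · exact ⟨_, mem_union_left _ (mem_filter.2 ⟨mem_image_of_mem _ hS, hlarge⟩), frag_subset hS⟩
    · obtain ⟨T, hT, hTS⟩ := hG _ (mem_filter.2 ⟨mem_image_of_mem _ hS, by omega⟩)
      exact ⟨T, mem_union_right _ hT, hTS.trans (frag_subset hS)⟩
  linarith [coverCost_le_Ep hp hcov, Ep_union_le hp (largeFrags r F W) G]

/-! ### Counting large fragments -/

variable {r w : ℕ} {X : Finset (Fin N)}

lemma card_mem_Icc_of_mem_largeFrags (hFr : ∀ S ∈ F, #S ≤ r) {T : Finset (Fin N)}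
    (hT : T ∈ largeFrags r F W) : #T ∈ Icc (r / 2 + 1) r := by
  obtain ⟨hT, hlarge⟩ := mem_filter.1 hT
  obtain ⟨S, hS, rfl⟩ := mem_image.1 hT
  have := (card_le_card (frag_subset (W := W) hS)).trans (hFr S hS)
  exact mem_Icc.2 ⟨by omega, this⟩

/-- A pair `(W, T)` is recovered from `(W ∪ T, T)`, and by minimality all large fragments `T`
with the same union `Y = W ∪ T` lie in one member of `F` contained in `Y`. -/
lemma card_sigma_largeFrags_le (hFX : ∀ S ∈ F, S ⊆ X) (hFr : ∀ S ∈ F, #S ≤ r) (k : ℕ) :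
    #((X.powersetCard w).sigma fun W => {T ∈ largeFrags r F W | #T = k})
      ≤ r.choose k * (#X).choose (w + k) := by
  rw [← card_powersetCard (w + k) X]
  refine card_le_mul_card_image_of_maps_to (f := fun q => q.1 ∪ q.2) ?_ _ fun Y _ => ?_
  · rintro ⟨W, T⟩ hq
    simp only [mem_sigma, mem_powersetCard, mem_filter, largeFrags, mem_image] at hq
    obtain ⟨⟨hWX, hW⟩, ⟨⟨S, hS, rfl⟩, -⟩, hT⟩ := hq
    refine mem_powersetCard.2 ⟨union_subset hWX ((frag_subset hS).trans (hFX S hS)), ?_⟩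
    rw [card_union_of_disjoint disjoint_frag, hW, hT]
  rcases Finset.eq_empty_or_nonempty
    {q ∈ (X.powersetCard w).sigma fun W => {T ∈ largeFrags r F W | #T = k} | q.1 ∪ q.2 = Y}
    with hempty | ⟨⟨W₀, T₀⟩, hq₀⟩
  · simp [hempty]
  simp only [mem_filter, mem_sigma, largeFrags, mem_image] at hq₀
  obtain ⟨⟨-, ⟨⟨S₀, hS₀, rfl⟩, -⟩, -⟩, rfl⟩ := hq₀
  have hV := (minWitness_spec (W := W₀) hS₀).1
  calc _ ≤ #((minWitness F W₀ S₀).powersetCard k) := by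
        refine card_le_card_of_injOn Sigma.snd ?_ ?_
        · rintro ⟨W, T⟩ hq
          simp only [mem_coe, mem_filter, mem_sigma, largeFrags, mem_image] at hq
          obtain ⟨⟨-, ⟨⟨S, hS, rfl⟩, -⟩, hT⟩, hY⟩ := hq
          refine mem_powersetCard.2 ⟨frag_subset_of_subset_union hS hV ?_, hT⟩
          rw [hY]
          exact minWitness_subset_union_frag
        · rintro ⟨W₁, T⟩ hq₁ ⟨W₂, T'⟩ hq₂ (rfl : T = T')
          simp only [mem_coe, mem_filter, mem_sigma, largeFrags, mem_image] at hq₁ hq₂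
          obtain ⟨⟨-, ⟨⟨S₁, -, rfl⟩, -⟩, -⟩, hY₁⟩ := hq₁
          obtain ⟨⟨-, ⟨⟨S₂, -, hS₂⟩, -⟩, -⟩, hY₂⟩ := hq₂
          have hW : W₁ = W₂ := by
            rw [← union_sdiff_cancel_right (disjoint_frag (F := F) (W := W₁) (S := S₁)),
              ← union_sdiff_cancel_right (disjoint_frag (F := F) (W := W₂) (S := S₂)), hS₂,
              hY₁, hY₂]
          subst hW
          rfl
    _ ≤ r.choose k := by
        rw [card_powersetCard]
        exact Nat.choose_le_choose k (hFr _ hV)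

/-! ### Weights -/

lemma mul_choose_succ_le {c : ℝ} (hp : 0 ≤ p) {n j : ℕ}
    (h : p * n ≤ c * (j + 1)) : p * n.choose (j + 1) ≤ c * n.choose j := by
  have hsucc : (n.choose (j + 1) : ℝ) * (j + 1) ≤ n.choose j * n := by
    exact_mod_cast (Nat.choose_succ_right_eq n j).trans_le (Nat.mul_le_mul_left _ (Nat.sub_le n j))
  refine le_of_mul_le_mul_right ?_ (by positivity : (0 : ℝ) < j + 1)
  calc p * n.choose (j + 1) * (j + 1) = p * (n.choose (j + 1) * (j + 1)) := by ring
    _ ≤ p * (n.choose j * n) := by gcongr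
    _ = (p * n) * n.choose j := by ring
    _ ≤ (c * (j + 1)) * n.choose j := by gcongr
    _ = c * n.choose j * (j + 1) := by ring

lemma pow_mul_choose_add_le {c : ℝ} (hp : 0 ≤ p) (hc : 0 ≤ c) {n w : ℕ} (h : p * n ≤ c * w)
    (k : ℕ) : p ^ k * n.choose (w + k) ≤ c ^ k * n.choose w := by
  induction k with
  | zero => simp
  | succ k ih =>
    have hstep : p * n.choose (w + k + 1) ≤ c * n.choose (w + k) :=
      mul_choose_succ_le hp (h.trans (by gcongr; push_cast; linarith))
    calc p ^ (k + 1) * n.choose (w + (k + 1))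
        = p ^ k * (p * n.choose (w + k + 1)) := by rw [← add_assoc]; ring
      _ ≤ p ^ k * (c * n.choose (w + k)) := by gcongr
      _ = c * (p ^ k * n.choose (w + k)) := by ring
      _ ≤ c * (c ^ k * n.choose w) := by gcongr
      _ = c ^ (k + 1) * n.choose w := by ring

noncomputable def fragWeight (c : ℝ) (r : ℕ) : ℝ :=
  ∑ k ∈ Icc (r / 2 + 1) r, (r.choose k : ℝ) * c ^ k

noncomputable def iterWeight (c : ℝ) : ℕ → ℕ → ℝ
  | 0, _ => 0
  | t + 1, r => fragWeight c r + iterWeight c t (r / 2)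

lemma Ep_largeFrags_eq (hFr : ∀ S ∈ F, #S ≤ r) (W : Finset (Fin N)) :
    Ep N p (largeFrags r F W)
      = ∑ k ∈ Icc (r / 2 + 1) r, p ^ k * #{T ∈ largeFrags r F W | #T = k} := by
  rw [Ep, ← sum_fiberwise_of_maps_to fun T hT => card_mem_Icc_of_mem_largeFrags hFr hT]
  refine sum_congr rfl fun k _ => ?_
  rw [sum_congr rfl fun T hT => by rw [(mem_filter.1 hT).2], sum_const, nsmul_eq_mul, mul_comm]

lemma sum_Ep_largeFrags_le {c : ℝ} (hp : 0 ≤ p) (hc : 0 ≤ c) (hFX : ∀ S ∈ F, S ⊆ X)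
    (hFr : ∀ S ∈ F, #S ≤ r) (hpX : p * #X ≤ c * w) :
    ∑ W ∈ X.powersetCard w, Ep N p (largeFrags r F W) ≤ fragWeight c r * (#X).choose w := by
  simp_rw [Ep_largeFrags_eq hFr]
  rw [sum_comm, fragWeight, sum_mul]
  refine sum_le_sum fun k _ => ?_
  have hcount : (#((X.powersetCard w).sigma fun W => {T ∈ largeFrags r F W | #T = k}) : ℝ)
      ≤ r.choose k * (#X).choose (w + k) := by
    exact_mod_cast card_sigma_largeFrags_le hFX hFr k
  rw [← mul_sum, ← Nat.cast_sum, ← card_sigma]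
  calc p ^ k * _ ≤ p ^ k * (r.choose k * (#X).choose (w + k)) := by gcongr
    _ = r.choose k * (p ^ k * (#X).choose (w + k)) := by ring
    _ ≤ r.choose k * (c ^ k * (#X).choose w) :=
        mul_le_mul_of_nonneg_left (pow_mul_choose_add_le hp hc hpX k) (by positivity)
    _ = r.choose k * c ^ k * (#X).choose w := by ring

lemma fragWeight_le {c : ℝ} (hc₀ : 0 ≤ c) (hc₁ : c ≤ 1) (r : ℕ) :
    fragWeight c r ≤ 2 ^ r * c ^ (r / 2 + 1) := by
  have hsub : Icc (r / 2 + 1) r ⊆ range (r + 1) := fun k hk =>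
    mem_range.2 (Nat.lt_succ_of_le (mem_Icc.1 hk).2)
  calc fragWeight c r ≤ ∑ k ∈ Icc (r / 2 + 1) r, (r.choose k : ℝ) * c ^ (r / 2 + 1) :=
        sum_le_sum fun k hk =>
          mul_le_mul_of_nonneg_left (pow_le_pow_of_le_one hc₀ hc₁ (mem_Icc.1 hk).1) (by positivity)
    _ ≤ ∑ k ∈ range (r + 1), (r.choose k : ℝ) * c ^ (r / 2 + 1) :=
        sum_le_sum_of_subset_of_nonneg hsub fun _ _ _ => by positivity
    _ = 2 ^ r * c ^ (r / 2 + 1) := by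
        rw [← sum_mul, ← Nat.cast_sum, Nat.sum_range_choose]; push_cast; rfl

/-- The weights telescope, which keeps their sum over all rounds bounded independently of `t`. -/
lemma fragWeight_le_sub (r : ℕ) :
    fragWeight (1 / 64) r ≤ 1 / 16 * ((1 / 2) ^ (r / 2) - (1 / 2) ^ r) := by
  rcases Nat.eq_zero_or_pos r with rfl | hr
  · simp [fragWeight]
  set j := r / 2
  have h2r : (2 : ℝ) ^ r ≤ 2 ^ (2 * j + 1) := pow_le_pow_right₀ (by norm_num) (by omega)
  have hhalf : ((1 : ℝ) / 2) ^ r ≤ (1 / 2) ^ (j + 1) :=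
    pow_le_pow_of_le_one (by norm_num) (by norm_num) (by omega)
  have hsixteenth : ((1 : ℝ) / 16) ^ j ≤ (1 / 2) ^ j :=
    pow_le_pow_left₀ (by norm_num) (by norm_num) j
  have hsplit : (2 : ℝ) ^ (2 * j + 1) * (1 / 64) ^ (j + 1) = 1 / 32 * (1 / 16) ^ j := by
    rw [show (1 / 16 : ℝ) = 2 ^ 2 * (1 / 64) by norm_num, mul_pow, pow_succ, pow_mul]
    ring
  calc fragWeight (1 / 64) r ≤ 2 ^ r * (1 / 64) ^ (j + 1) :=
        fragWeight_le (by norm_num) (by norm_num) r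
    _ ≤ 2 ^ (2 * j + 1) * (1 / 64) ^ (j + 1) := by gcongr
    _ = 1 / 32 * (1 / 16) ^ j := hsplit
    _ ≤ 1 / 32 * (1 / 2) ^ j := by gcongr
    _ ≤ 1 / 16 * ((1 / 2) ^ j - (1 / 2) ^ r) := by rw [pow_succ] at hhalf; linarith

lemma iterWeight_le (t r : ℕ) : iterWeight (1 / 64) t r ≤ 1 / 16 * (1 - (1 / 2) ^ r) := by
  induction t generalizing r with
  | zero =>
    have : ((1 : ℝ) / 2) ^ r ≤ 1 := pow_le_one₀ (by norm_num) (by norm_num)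
    simp only [iterWeight]
    linarith
  | succ t ih =>
    have := ih (r / 2)
    have := fragWeight_le_sub r
    simp only [iterWeight]
    linarith

/-! ### The iteration -/

noncomputable def uncovered (X : Finset (Fin N)) (k : ℕ) (F : Finset (Finset (Fin N))) :
    Finset (Finset (Fin N)) :=
  {A ∈ X.powersetCard k | ¬ ∃ S ∈ F, S ⊆ A}

lemma uncovered_eq_empty (hF : ∅ ∈ F) (X : Finset (Fin N)) (k : ℕ) : uncovered X k F = ∅ :=
  filter_eq_empty_iff.2 fun A _ => not_not.2 ⟨∅, hF, empty_subset A⟩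

lemma smallFrags_subset_sdiff (hFX : ∀ S ∈ F, S ⊆ X) {R : Finset (Fin N)}
    (hR : R ∈ smallFrags r F W) : R ⊆ X \ W := by
  obtain ⟨S, hS, rfl⟩ := mem_image.1 (mem_filter.1 hR).1
  exact subset_sdiff.2 ⟨(frag_subset hS).trans (hFX S hS), disjoint_frag.symm⟩

lemma card_le_of_mem_smallFrags {R : Finset (Fin N)} (hR : R ∈ smallFrags r F W) :
    #R ≤ r / 2 := by
  have := (mem_filter.1 hR).2
  omega

/-- Removing `W` from an uncovered set containing it leaves a set uncovered by the small
fragments, since each of them together with `W` contains a member of `F`. -/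
lemma card_uncovered_superset_le (r a : ℕ) (F : Finset (Finset (Fin N))) (X W : Finset (Fin N)) :
    #{A ∈ uncovered X (a + #W) F | W ⊆ A} ≤ #(uncovered (X \ W) a (smallFrags r F W)) := by
  refine card_le_card_of_injOn (· \ W) (fun A hA => ?_) fun A₁ hA₁ A₂ hA₂ h => ?_
  · simp only [mem_coe, mem_filter, uncovered, mem_powersetCard] at hA ⊢
    obtain ⟨⟨⟨hAX, hA⟩, hunc⟩, hWA⟩ := hA
    refine ⟨⟨sdiff_subset_sdiff hAX subset_rfl, by rw [card_sdiff_of_subset hWA, hA]; omega⟩, ?_⟩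
    rintro ⟨R, hR, hRA⟩
    obtain ⟨S, hS, hSW⟩ := exists_subset_union_of_mem_smallFrags hR
    exact hunc ⟨S, hS, hSW.trans (union_subset hWA (hRA.trans sdiff_subset))⟩
  · rw [← sdiff_union_of_subset (mem_filter.1 hA₁).2, ← sdiff_union_of_subset (mem_filter.1 hA₂).2]
    exact congrArg (· ∪ W) h

lemma card_uncovered_mul_choose_le (r a b : ℕ) (F : Finset (Finset (Fin N)))
    (X : Finset (Fin N)) :
    #(uncovered X (a + b) F) * (a + b).choose b
      ≤ ∑ W ∈ X.powersetCard b, #(uncovered (X \ W) a (smallFrags r F W)) := by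
  have hsubsets : ∀ A ∈ uncovered X (a + b) F,
      #((X.powersetCard b).bipartiteAbove (fun A W => W ⊆ A) A) = (a + b).choose b := by
    intro A hA
    obtain ⟨hAX, hA⟩ := mem_powersetCard.1 (mem_filter.1 hA).1
    rw [← hA, ← card_powersetCard]
    congr 1
    ext W
    simp only [mem_bipartiteAbove, mem_powersetCard]
    exact ⟨fun h => ⟨h.2, h.1.2⟩, fun h => ⟨⟨h.1.trans hAX, h.2⟩, h.1⟩⟩
  calc #(uncovered X (a + b) F) * (a + b).choose b
      = ∑ A ∈ uncovered X (a + b) F, #((X.powersetCard b).bipartiteAbove (fun A W => W ⊆ A) A) := by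
        rw [sum_congr rfl hsubsets, sum_const, smul_eq_mul]
    _ = ∑ W ∈ X.powersetCard b, #{A ∈ uncovered X (a + b) F | W ⊆ A} :=
        sum_card_bipartiteAbove_eq_sum_card_bipartiteBelow _
    _ ≤ _ := sum_le_sum fun W hW => by
        simpa only [(mem_powersetCard.1 hW).2] using card_uncovered_superset_le r a F X W

lemma card_uncovered_zero_le (hp : 0 ≤ p) (hF : ∀ S ∈ F, #S ≤ 0) {θ : ℝ}
    (hθ : θ ≤ coverCost N p F) (hθ' : θ ≤ 1 / 2) (X : Finset (Fin N)) :
    (#(uncovered X 0 F) : ℝ) ≤ 1 - 2 * θ := by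
  by_cases hempty : ∅ ∈ F
  · rw [uncovered_eq_empty hempty, card_empty, Nat.cast_zero]
    linarith
  · have hF : F = ∅ := eq_empty_of_forall_notMem fun S hS =>
      hempty (card_eq_zero.1 (Nat.le_zero.1 (hF S hS)) ▸ hS)
    rw [hF, coverCost_empty hp] at hθ
    have : #(uncovered X 0 F) ≤ 1 := (card_filter_le _ _).trans (by simp)
    have : (#(uncovered X 0 F) : ℝ) ≤ 1 := by exact_mod_cast this
    linarith

/-- Each round pays the cost of the large fragments out of `θ` and halves the bound on the
sizes of the remaining ones, so after `t` rounds (`r < 2 ^ t`) only empty fragments remain. -/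
theorem card_uncovered_le {c : ℝ} (hp : 0 ≤ p) (hc : 0 ≤ c) (w t : ℕ) {θ : ℝ}
    (hFX : ∀ S ∈ F, S ⊆ X) (hFr : ∀ S ∈ F, #S ≤ r) (hr : r < 2 ^ t) (htw : t * w ≤ #X)
    (hpX : p * #X ≤ c * w)
    (hθ : θ ≤ coverCost N p F) (hθ' : θ ≤ 1 / 2) :
    (#(uncovered X (t * w) F) : ℝ) ≤ (2 * iterWeight c t r + 1 - 2 * θ) * (#X).choose (t * w) := by
  induction t generalizing r X F θ with
  | zero =>
    simp only [zero_mul, iterWeight, Nat.choose_zero_right]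
    have hF0 : ∀ S ∈ F, #S ≤ 0 := fun S hS => by simpa using (hFr S hS).trans_lt hr
    simpa using card_uncovered_zero_le hp hF0 hθ hθ' X
  | succ t ih =>
    rw [Nat.succ_mul] at htw ⊢
    have hround : ∀ W ∈ X.powersetCard w, (#(uncovered (X \ W) (t * w) (smallFrags r F W)) : ℝ)
        ≤ (2 * iterWeight c t (r / 2) + 1 - 2 * (θ - Ep N p (largeFrags r F W)))
          * (#X - w).choose (t * w) := by
      intro W hW
      obtain ⟨hWX, hW⟩ := mem_powersetCard.1 hW
      have hXW : #(X \ W) = #X - w := by rw [card_sdiff_of_subset hWX, hW]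
      have hpXW : p * #(X \ W) ≤ c * w :=
        (mul_le_mul_of_nonneg_left (by rw [hXW]; exact_mod_cast Nat.sub_le _ _) hp).trans hpX
      rw [← hXW]
      refine ih (fun R hR => smallFrags_subset_sdiff hFX hR)
        (fun R hR => card_le_of_mem_smallFrags hR) (by rw [pow_succ] at hr; omega) (by omega)
        hpXW ?_ ?_
      · linarith [coverCost_le_Ep_largeFrags_add hp r F W]
      · linarith [Ep_nonneg hp (largeFrags r F W)]
    have hchoose : ((#X).choose (t * w + w) * (t * w + w).choose w : ℝ)
        = (#X).choose w * (#X - w).choose (t * w) := by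
      rw [← Nat.cast_mul, Nat.choose_mul (by omega), Nat.add_sub_cancel, Nat.cast_mul]
    refine le_of_mul_le_mul_right ?_ (by exact_mod_cast Nat.choose_pos (by omega) :
      (0 : ℝ) < (t * w + w).choose w)
    calc (#(uncovered X (t * w + w) F) * (t * w + w).choose w : ℝ)
        ≤ ∑ W ∈ X.powersetCard w, (#(uncovered (X \ W) (t * w) (smallFrags r F W)) : ℝ) := by
          exact_mod_cast card_uncovered_mul_choose_le r (t * w) w F X
      _ ≤ ∑ W ∈ X.powersetCard w, (2 * iterWeight c t (r / 2) + 1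
            - 2 * (θ - Ep N p (largeFrags r F W))) * (#X - w).choose (t * w) :=
          sum_le_sum hround
      _ = ((2 * iterWeight c t (r / 2) + 1 - 2 * θ) * (#X).choose w
            + 2 * ∑ W ∈ X.powersetCard w, Ep N p (largeFrags r F W)) * (#X - w).choose (t * w) := by
          simp only [← sum_mul, mul_sub, sub_sub_eq_add_sub, sum_add_distrib, sum_sub_distrib,
            sum_const, card_powersetCard, nsmul_eq_mul, ← mul_sum]
          ring
      _ ≤ ((2 * iterWeight c t (r / 2) + 1 - 2 * θ) * (#X).choose w
            + 2 * (fragWeight c r * (#X).choose w)) * (#X - w).choose (t * w) := by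
          gcongr
          exact sum_Ep_largeFrags_le hp hc hFX hFr hpX
      _ = (2 * iterWeight c (t + 1) r + 1 - 2 * θ) * (#X).choose (t * w + w)
            * (t * w + w).choose w := by
          rw [iterWeight, mul_assoc _ ((#X).choose (t * w + w) : ℝ), hchoose]
          ring

/-! ### Passing between levels -/

/-- The uncovered sets form a down-set, so this is local LYM. -/
lemma antitone_card_uncovered_div_choose (H : Finset (Finset (Fin N))) :
    Antitone fun k => (#(uncovered univ k H) : ℝ) / N.choose k := by
  refine antitone_nat_of_succ_le fun k => ?_
  have hsized : (uncovered univ (k + 1) H : Set (Finset (Fin N))).Sized (k + 1) :=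
    (Set.sized_powersetCard univ (k + 1)).mono (coe_subset.2 (filter_subset _ _))
  have hshadow : (uncovered univ (k + 1) H).shadow ⊆ uncovered univ k H := by
    intro A hA
    obtain ⟨B, hB, a, ha, rfl⟩ := mem_shadow_iff.1 hA
    simp only [uncovered, mem_filter, mem_powersetCard] at hB ⊢
    refine ⟨⟨subset_univ _, by rw [card_erase_of_mem ha, hB.1.2]; rfl⟩, ?_⟩
    rintro ⟨S, hS, hSB⟩
    exact hB.2 ⟨S, hS, hSB.trans (erase_subset a B)⟩
  calc (#(uncovered univ (k + 1) H) : ℝ) / N.choose (k + 1)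
      ≤ #((uncovered univ (k + 1) H).shadow) / N.choose k := by
        simpa using local_lubell_yamamoto_meshalkin_inequality_div (𝕜 := ℝ) k.succ_ne_zero hsized
    _ ≤ #(uncovered univ k H) / N.choose k := by gcongr

lemma card_level_inter_cl_add_card_uncovered (m : ℕ) (H : Finset (Finset (Fin N))) :
    #(level N m ∩ cl N H) + #(uncovered univ m H) = N.choose m := by
  have : level N m ∩ cl N H = {A ∈ level N m | ∃ S ∈ H, S ⊆ A} := by
    ext A
    simp [cl]
  rw [this, uncovered, ← level, card_filter_add_card_filter_not, level, card_powersetCard,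
    card_univ, Fintype.card_fin]

lemma rounds_mul_width_le {l : ℕ} (hl : 1 ≤ l) (hpN : 1 / 2 ≤ N * p) :
    (Nat.log 2 l + 1) * ⌈64 * p * N⌉₊ ≤ ⌊132 * p * N * Real.logb 2 (l + 1)⌋₊ := by
  have hl' : (2 : ℝ) ≤ l + 1 := by norm_cast; omega
  have hlog : 1 ≤ Real.logb 2 (l + 1) := by
    rw [Real.le_logb_iff_rpow_le one_lt_two (by positivity), Real.rpow_one]
    exact hl'
  have hrounds : ((Nat.log 2 l + 1 : ℕ) : ℝ) ≤ 2 * Real.logb 2 (l + 1) := by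
    have := Real.natLog_le_logb l 2
    have := Real.logb_le_logb_of_le (b := 2) one_lt_two (by positivity : (0 : ℝ) < l)
      (le_add_of_nonneg_right zero_le_one)
    push_cast at *
    linarith
  have hwidth : (⌈64 * p * N⌉₊ : ℝ) ≤ 66 * p * N := by
    linarith [Nat.ceil_lt_add_one (by linarith : 0 ≤ 64 * p * N)]
  apply Nat.le_floor
  push_cast
  calc ((Nat.log 2 l : ℝ) + 1) * ⌈64 * p * N⌉₊
      ≤ (2 * Real.logb 2 (l + 1)) * (66 * p * N) := by
        push_cast at hrounds
        gcongr
    _ = 132 * p * N * Real.logb 2 (l + 1) := by ring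

end ParkPham

open ParkPham in
/-- Park–Pham covering theorem. -/
theorem park_pham_covering :
    ∃ L : ℝ, 0 < L ∧
      ∀ (N l : ℕ), 1 ≤ l → ∀ p : ℝ, 0 < p → p ≤ 1 →
        ∀ H : Finset (Finset (Fin N)), (∀ S ∈ H, S.card ≤ l) →
          coverCost N p H ≥ 1 / 2 →
          ∀ m : ℕ, m = ⌊L * p * N * Real.logb 2 (l + 1)⌋₊ → m ≤ N →
            ((level N m ∩ cl N H).card : ℝ) ≥ 2 / 3 * (N.choose m : ℝ) := by
  refine ⟨132, by norm_num, fun N l hl p hp _ H hH hcost m hm hmN => ?_⟩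
  suffices h : (#(uncovered univ m H) : ℝ) ≤ 1 / 8 * N.choose m by
    have : (#(level N m ∩ cl N H) + #(uncovered univ m H) : ℝ) = N.choose m := by
      exact_mod_cast card_level_inter_cl_add_card_uncovered m H
    linarith
  by_cases hempty : ∅ ∈ H
  · simp [uncovered_eq_empty hempty]
  set t := Nat.log 2 l + 1
  set w := ⌈64 * p * N⌉₊
  have htw : t * w ≤ m := hm ▸ rounds_mul_width_le hl (hcost.trans (coverCost_le_mul hp.le hempty))
  have hCtw : (0 : ℝ) < N.choose (t * w) := by exact_mod_cast Nat.choose_pos (htw.trans hmN)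
  have hCm : (0 : ℝ) < N.choose m := by exact_mod_cast Nat.choose_pos hmN
  have htw_density : (#(uncovered univ (t * w) H) : ℝ) / N.choose (t * w) ≤ 1 / 8 := by
    have hX : #(univ : Finset (Fin N)) = N := by simp
    have hbound := card_uncovered_le (c := 1 / 64) hp.le (by norm_num) w t (X := univ)
      (fun S _ => subset_univ S) hH (Nat.lt_pow_succ_log_self one_lt_two l)
      (by rw [hX]; exact htw.trans hmN) (by rw [hX]; linarith [Nat.le_ceil (64 * p * N)]) hcost le_rfl
    have hweight : iterWeight (1 / 64) t l ≤ 1 / 16 := by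
      linarith [iterWeight_le t l, (by positivity : (0 : ℝ) ≤ (1 / 2) ^ l)]
    rw [hX] at hbound
    rw [div_le_iff₀ hCtw]
    nlinarith
  have := (antitone_card_uncovered_div_choose H htw).trans htw_density
  rwa [div_le_iff₀ hCm] at this
end

section
/- Restriction inequality for cover cost: Let H be a family of subsets of X and W ⊆ X. Let H_W = {S \ W : S ∈ H}, let H'_W be the minimal sets of H_W, and write H'_W = G_W ∪ H̃_W as any partition. Then f(H̃_W) ≥ f(H) − f(G_W), where all cover costs are computed with the same parameter p (and f(H'_W) ≥ f(H), since any cover of H'_W covers H). -/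
open Finset
open scoped Classical

/- Every `S ∈ H` contains `S \ W ∈ H_W`, which contains a minimal member of `H_W`, so
`H'_W` covers `H`, and hence every cover of `H'_W` covers `H`: `f(H) ≤ f(H'_W)`. Concatenating optimal
covers of `G_W` and `H̃_W` covers `H'_W = G_W ∪ H̃_W`, and for `p ≥ 0` the cost `E_p` is subadditive,
so `f(H) ≤ f(G_W) + f(H̃_W)`. -/

namespace Covers

variable {N : ℕ}

theorem refl (F : Finset (Finset (Fin N))) : Covers N F F :=
  fun S hS => ⟨S, hS, subset_rfl⟩

theorem trans {G F H : Finset (Finset (Fin N))} (hGF : Covers N G F) (hFH : Covers N F H) :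
    Covers N G H := by
  intro S hS
  obtain ⟨T, hT, hTS⟩ := hFH S hS
  obtain ⟨U, hU, hUT⟩ := hGF T hT
  exact ⟨U, hU, hUT.trans hTS⟩

theorem union {G₁ G₂ F₁ F₂ : Finset (Finset (Fin N))} (h₁ : Covers N G₁ F₁)
    (h₂ : Covers N G₂ F₂) : Covers N (G₁ ∪ G₂) (F₁ ∪ F₂) := by
  intro S hS
  rcases Finset.mem_union.mp hS with hS | hS
  · obtain ⟨T, hT, hTS⟩ := h₁ S hS
    exact ⟨T, Finset.mem_union_left _ hT, hTS⟩
  · obtain ⟨T, hT, hTS⟩ := h₂ S hS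
    exact ⟨T, Finset.mem_union_right _ hT, hTS⟩

theorem image_sdiff (H : Finset (Finset (Fin N))) (W : Finset (Fin N)) :
    Covers N (H.image (· \ W)) H :=
  fun S hS => ⟨S \ W, Finset.mem_image_of_mem _ hS, Finset.sdiff_subset⟩

theorem filter_minimal (F : Finset (Finset (Fin N))) :
    Covers N (F.filter fun T => ∀ T' ∈ F, T' ⊆ T → T' = T) F := by
  intro S hS
  obtain ⟨T, hTS, hT⟩ := F.exists_le_minimal hS
  exact ⟨T, Finset.mem_filter.mpr ⟨hT.prop, fun T' hT' hT'T => hT.eq_of_le hT' hT'T⟩, hTS⟩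

end Covers

theorem Ep_union_le {N : ℕ} {p : ℝ} (hp : 0 ≤ p) (G₁ G₂ : Finset (Finset (Fin N))) :
    Ep N p (G₁ ∪ G₂) ≤ Ep N p G₁ + Ep N p G₂ := by
  have hinter : 0 ≤ Ep N p (G₁ ∩ G₂) := Finset.sum_nonneg fun S _ => pow_nonneg hp _
  have := Finset.sum_union_inter (s₁ := G₁) (s₂ := G₂) (f := fun S : Finset (Fin N) => p ^ S.card)
  unfold Ep at *
  linarith

section coverCost

variable {N : ℕ} (p : ℝ)

theorem finite_Ep_of_covers (F : Finset (Finset (Fin N))) :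
    {x : ℝ | ∃ G, Covers N G F ∧ x = Ep N p G}.Finite :=
  (Set.finite_range (Ep N p)).subset fun _ ⟨G, _, hx⟩ => ⟨G, hx.symm⟩

theorem coverCost_le_Ep {F G : Finset (Finset (Fin N))} (h : Covers N G F) :
    coverCost N p F ≤ Ep N p G :=
  csInf_le (finite_Ep_of_covers p F).bddBelow ⟨G, h, rfl⟩

theorem exists_covers_coverCost_eq (F : Finset (Finset (Fin N))) :
    ∃ G, Covers N G F ∧ coverCost N p F = Ep N p G :=
  (show Set.Nonempty {x : ℝ | ∃ G, Covers N G F ∧ x = Ep N p G} from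
    ⟨_, F, Covers.refl F, rfl⟩).csInf_mem (finite_Ep_of_covers p F)

theorem coverCost_le_of_covers {F F' : Finset (Finset (Fin N))} (h : Covers N F' F) :
    coverCost N p F ≤ coverCost N p F' := by
  obtain ⟨G, hG, hcost⟩ := exists_covers_coverCost_eq p F'
  exact hcost ▸ coverCost_le_Ep p (hG.trans h)

end coverCost

theorem coverCost_union_le {N : ℕ} {p : ℝ} (hp : 0 ≤ p) (F₁ F₂ : Finset (Finset (Fin N))) :
    coverCost N p (F₁ ∪ F₂) ≤ coverCost N p F₁ + coverCost N p F₂ := by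
  obtain ⟨G₁, hG₁, h₁⟩ := exists_covers_coverCost_eq p F₁
  obtain ⟨G₂, hG₂, h₂⟩ := exists_covers_coverCost_eq p F₂
  rw [h₁, h₂]
  exact (coverCost_le_Ep p (hG₁.union hG₂)).trans (Ep_union_le hp G₁ G₂)

theorem restriction_cover_cost_general {N : ℕ} (p : ℝ) (hp0 : 0 ≤ p)
    (H : Finset (Finset (Fin N))) (W : Finset (Fin N))
    (HW H'W Gw Htil : Finset (Finset (Fin N)))
    (hHW : HW = H.image (fun S => S \ W))
    (hH'W : H'W = HW.filter (fun T => ∀ T' ∈ HW, T' ⊆ T → T' = T))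
    (hpart : Gw ∪ Htil = H'W) :
    coverCost N p Htil ≥ coverCost N p H - coverCost N p Gw ∧
    coverCost N p H'W ≥ coverCost N p H := by
  have hcovers : Covers N H'W H := by
    subst hHW hH'W
    exact (Covers.filter_minimal _).trans (Covers.image_sdiff H W)
  have hrestrict : coverCost N p H ≤ coverCost N p H'W := coverCost_le_of_covers p hcovers
  have hsplit : coverCost N p H'W ≤ coverCost N p Gw + coverCost N p Htil :=
    hpart ▸ coverCost_union_le hp0 Gw Htil
  exact ⟨by linarith, hrestrict⟩

/-- Restriction inequality for cover cost: if the minimal sets `H'_W` of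
`H_W = {S \ W : S ∈ H}` are partitioned as `G_W ∪ H̃_W`, then
`f(H̃_W) ≥ f(H) − f(G_W)`, and `f(H'_W) ≥ f(H)`. -/
theorem restriction_cover_cost {N : ℕ} (p : ℝ) (hp0 : 0 ≤ p) (hp1 : p ≤ 1)
    (H : Finset (Finset (Fin N))) (W : Finset (Fin N))
    (HW H'W Gw Htil : Finset (Finset (Fin N)))
    (hHW : HW = H.image (fun S => S \ W))
    (hH'W : H'W = HW.filter (fun T => ∀ T' ∈ HW, T' ⊆ T → T' = T))
    (hpart : Gw ∪ Htil = H'W) (hdisj : Disjoint Gw Htil) :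
    coverCost N p Htil ≥ coverCost N p H - coverCost N p Gw ∧
    coverCost N p H'W ≥ coverCost N p H :=
  restriction_cover_cost_general p hp0 H W HW H'W Gw Htil hHW hH'W hpart
end
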